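/- Every ring homomorphism from the homogeneous localization ℝ[x₁,…,xₙ]_{(Σ)} to ℝ is of the form f/Σ^{deg f} ↦ f(x) for some point x = (x₁,…,xₙ) ∈ ℝⁿ with x₁ + ⋯ + xₙ = 1. -/
import Mathlib


open MvPolynomial

noncomputable section

/-- The field of rational functions in `n` variables over `ℝ`. -/
abbrev RatField (n : ℕ) := FractionRing (MvPolynomial (Fin n) ℝ)

/-- Inclusion of polynomials into the field of rational functions. -/
noncomputable def ι (n : ℕ) : MvPolynomial (Fin n) ℝ →+* RatField n :=
  algebraMap (MvPolynomial (Fin n) ℝ) (RatField n)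

/-- The linear form `Σ = x₁ + ⋯ + xₙ`. -/
noncomputable def sigma (n : ℕ) : MvPolynomial (Fin n) ℝ := ∑ i, X i

theorem sigma_isHomogeneous (n : ℕ) : (sigma n).IsHomogeneous 1 :=
  IsHomogeneous.sum _ _ _ fun i _ => isHomogeneous_X ℝ i

theorem sigma_ne_zero {n : ℕ} (hn : 0 < n) : sigma n ≠ 0 := by
  intro h
  have := congrArg (eval fun _ : Fin n => (1 : ℝ)) h
  simp [sigma] at this
  omega

theorem iota_sigma_ne_zero {n : ℕ} (hn : 0 < n) : ι n (sigma n) ≠ 0 := by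
  simpa [ι, map_eq_zero_iff _
    (IsFractionRing.injective (MvPolynomial (Fin n) ℝ) (RatField n))] using sigma_ne_zero hn

/-- The homogeneous localization `ℝ[x]_{(Σ)} = { f/Σ^{deg f} : f a form }`, as a subring of
the field of rational functions. -/
noncomputable def homogLoc (n : ℕ) (hn : 0 < n) : Subring (RatField n) where
  carrier := {a | ∃ (d : ℕ) (f : MvPolynomial (Fin n) ℝ), f.IsHomogeneous d ∧
    a = ι n f / (ι n (sigma n)) ^ d}
  zero_mem' := ⟨0, 0, isHomogeneous_zero _ _ _, by simp⟩
  one_mem' := ⟨0, 1, isHomogeneous_one _ _, by simp⟩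
  add_mem' := by
    rintro a b ⟨d, f, hf, rfl⟩ ⟨e, g, hg, rfl⟩
    refine ⟨d + e, f * sigma n ^ e + g * sigma n ^ d, ?_, ?_⟩
    · have h1 : (f * sigma n ^ e).IsHomogeneous (d + e) := by
        simpa using hf.mul ((sigma_isHomogeneous n).pow e)
      have h2 : (g * sigma n ^ d).IsHomogeneous (d + e) := by
        have := hg.mul ((sigma_isHomogeneous n).pow d)
        simpa [add_comm] using this
      exact h1.add h2
    · have h : ι n (sigma n) ≠ 0 := iota_sigma_ne_zero hn
      rw [div_add_div _ _ (pow_ne_zero d h) (pow_ne_zero e h)]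
      simp only [map_add, map_mul, map_pow, pow_add]
      ring_nf
  neg_mem' := by
    rintro a ⟨d, f, hf, rfl⟩
    exact ⟨d, -f, hf.neg, by simp [neg_div]⟩
  mul_mem' := by
    rintro a b ⟨d, f, hf, rfl⟩ ⟨e, g, hg, rfl⟩
    exact ⟨d + e, f * g, hf.mul hg, by rw [map_mul, pow_add, div_mul_div_comm]⟩

set_option maxHeartbeats 1000000 in
set_option synthInstance.maxHeartbeats 200000 in
/-- Every ring homomorphism `ℝ[x]_{(Σ)} → ℝ` is evaluation `f/Σ^{deg f} ↦ f(x)` at some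
point `x ∈ ℝⁿ` with `x₁ + ⋯ + xₙ = 1`. -/
theorem ringHom_homogLoc_eq_eval {n : ℕ} (hn : 0 < n) (χ : homogLoc n hn →+* ℝ) :
    ∃ x : Fin n → ℝ, (∑ i, x i) = 1 ∧
      ∀ (d : ℕ) (f : MvPolynomial (Fin n) ℝ) (hf : f.IsHomogeneous d),
        χ ⟨ι n f / (ι n (sigma n)) ^ d, ⟨d, f, hf, rfl⟩⟩ = eval x f := by
  classical
  have hσ : ι n (sigma n) ≠ 0 := iota_sigma_ne_zero hn
  have memC : ∀ c : ℝ, ((ι n).comp (C : ℝ →+* MvPolynomial (Fin n) ℝ)) c ∈ homogLoc n hn :=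
    fun c => ⟨0, C c, isHomogeneous_C _ _, by simp [ι]⟩
  set rh : ℝ →+* homogLoc n hn :=
    ((ι n).comp (C : ℝ →+* MvPolynomial (Fin n) ℝ)).codRestrict _ memC with hrh
  have hχC : ∀ c : ℝ, χ (rh c) = c := by
    intro c
    have h : χ.comp rh = RingHom.id ℝ := Subsingleton.elim _ _
    exact RingHom.congr_fun h c
  have memX : ∀ i : Fin n, (ι n (X i) / ι n (sigma n) ^ 1 : RatField n) ∈ homogLoc n hn :=
    fun i => ⟨1, X i, isHomogeneous_X ℝ i, rfl⟩
  set ξ : Fin n → homogLoc n hn := fun i => ⟨_, memX i⟩ with hξ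
  set x : Fin n → ℝ := fun i => χ (ξ i) with hx
  refine ⟨x, ?_, ?_⟩
  · have hsum : (∑ i, ξ i) = 1 := by
      apply Subtype.ext
      push_cast [hξ]
      simp only [pow_one]
      rw [← Finset.sum_div, ← map_sum, div_eq_one_iff_eq hσ]
      rfl
    rw [hx]
    calc (∑ i, χ (ξ i)) = χ (∑ i, ξ i) := (map_sum χ ξ Finset.univ).symm
    _ = 1 := by rw [hsum, map_one]
  · intro d f hf
    have key : (⟨ι n f / ι n (sigma n) ^ d, ⟨d, f, hf, rfl⟩⟩ : homogLoc n hn)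
        = ∑ s ∈ f.support, rh (coeff s f) * ∏ i, ξ i ^ s i := by
      apply Subtype.ext
      push_cast [hrh, hξ]
      have : ∀ s ∈ f.support,
          ((((ι n).comp (C : ℝ →+* MvPolynomial (Fin n) ℝ)).codRestrict _ memC (coeff s f) :
              homogLoc n hn) : RatField n) *
            ∏ i, (ι n (X i) / ι n (sigma n) ^ 1) ^ s i
          = ι n (monomial s (coeff s f)) / ι n (sigma n) ^ d := by
        intro s hs
        have hdeg : ∑ i, s i = d := by
          have := hf (mem_support_iff.mp hs)
          simpa [Finsupp.weight, Finsupp.linearCombination, Finsupp.sum_fintype] using this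
        have hcoe : ((((ι n).comp (C : ℝ →+* MvPolynomial (Fin n) ℝ)).codRestrict _ memC
            (coeff s f) : homogLoc n hn) : RatField n) = ι n (C (coeff s f)) := rfl
        simp only [pow_one, div_pow, Finset.prod_div_distrib, Finset.prod_pow_eq_pow_sum, hdeg,
          hcoe, ← map_pow, ← map_prod]
        rw [mul_div_assoc', ← map_mul]
        congr 1
        rw [monomial_eq]
        congr 1
        rw [Finsupp.prod_pow]
      rw [Finset.sum_congr rfl this, ← Finset.sum_div, ← map_sum]
      congr 2
      exact f.as_sum
    rw [key, map_sum, eval_eq']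
    refine Finset.sum_congr rfl fun s _ => ?_
    rw [map_mul, hχC, map_prod]
    congr 1
    refine Finset.prod_congr rfl fun i _ => ?_
    rw [map_pow]

end
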